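/- arXiv:0804.2029 — 6 statements merged into one kernel-verified Lean document; each statement's English description precedes it below -/
import Mathlib

section
/- Let d ≥ 1, let D ⊆ ℝ^d be a nonempty bounded open set, and let V : D → ℝ be differentiable on D such that V(x) → +∞ as x approaches the boundary of D. Then for every nonzero vector v ∈ ℝ^d there exists a point x ∈ D with ⟨∇V(x), v⟩ > 0. -/
open scoped RealInnerProductSpace
open Set Filter Bornology Topology

/-!
Suppose `⟪∇V, v⟫ ≤ 0` on all of `D` and start at any `x₀ ∈ D`. Since `D` is bounded, the ray
`t ↦ x₀ + t • v` leaves `D`, at a first exit time `T > 0`. On `[0, T)` the function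
`t ↦ V (x₀ + t • v)` is nonincreasing, so it stays below `V x₀`; but just before time `T` the ray
is outside any given compact subset of `D`, where `V` is as large as we please.
-/

lemma exists_nonneg_add_smul_notMem {E : Type*} [NormedAddCommGroup E] [NormedSpace ℝ E]
    {D : Set E} (hD : IsBounded D) (x : E) {v : E} (hv : v ≠ 0) :
    ∃ s : ℝ, 0 ≤ s ∧ x + s • v ∉ D := by
  obtain ⟨r, hr⟩ := hD.subset_closedBall x
  have hv' : 0 < ‖v‖ := norm_pos_iff.2 hv
  refine ⟨(|r| + 1) / ‖v‖, by positivity, fun h => ?_⟩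
  have hdist := hr h
  rw [Metric.mem_closedBall, dist_eq_norm, add_sub_cancel_left, norm_smul,
    Real.norm_of_nonneg (by positivity), div_mul_cancel₀ _ hv'.ne'] at hdist
  linarith [le_abs_self r]

lemma exists_pos_mapsTo_Ico_notMem {X : Type*} [TopologicalSpace X] {D : Set X}
    (hD : IsOpen D) {γ : ℝ → X} (hγ : Continuous γ) (h0 : γ 0 ∈ D) {s : ℝ} (hs : 0 ≤ s)
    (hsD : γ s ∉ D) : ∃ T : ℝ, 0 < T ∧ MapsTo γ (Ico 0 T) D ∧ γ T ∉ D := by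
  set A : Set ℝ := Ici 0 ∩ γ ⁻¹' Dᶜ
  have hA_closed : IsClosed A := isClosed_Ici.inter (hD.isClosed_compl.preimage hγ)
  have hA_bdd : BddBelow A := ⟨0, fun _ ht => ht.1⟩
  have hTA : sInf A ∈ A := hA_closed.csInf_mem ⟨s, hs, hsD⟩ hA_bdd
  refine ⟨sInf A, hTA.1.lt_of_ne fun h => hTA.2 (h ▸ h0), fun t ht => ?_, hTA.2⟩
  by_contra htD
  exact notMem_of_lt_csInf ht.2 hA_bdd ⟨ht.1, htD⟩

section Gradient

variable {F : Type*} [NormedAddCommGroup F] [InnerProductSpace ℝ F] [CompleteSpace F]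
  {V : F → ℝ}

lemma HasGradientAt.hasDerivAt_comp_add_smul {g x v : F} {t : ℝ}
    (h : HasGradientAt V g (x + t • v)) :
    HasDerivAt (fun s : ℝ => V (x + s • v)) ⟪g, v⟫ t := by
  have hline : HasDerivAt (fun s : ℝ => x + s • v) v t := by
    simpa using ((hasDerivAt_id t).smul_const v).const_add x
  exact h.hasFDerivAt.comp_hasDerivAt t hline

lemma antitoneOn_comp_add_smul_of_inner_nonpos {gradV : F → F} {x v : F} {I : Set ℝ}
    (hI : Convex ℝ I) (hV : ∀ t ∈ I, HasGradientAt V (gradV (x + t • v)) (x + t • v))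
    (hnonpos : ∀ t ∈ I, ⟪gradV (x + t • v), v⟫ ≤ 0) :
    AntitoneOn (fun t : ℝ => V (x + t • v)) I := by
  have hderiv : ∀ t ∈ I, HasDerivAt (fun s : ℝ => V (x + s • v)) ⟪gradV (x + t • v), v⟫ t :=
    fun t ht => (hV t ht).hasDerivAt_comp_add_smul
  exact antitoneOn_of_hasDerivWithinAt_nonpos hI
    (fun t ht => (hderiv t ht).continuousAt.continuousWithinAt)
    (fun t ht => (hderiv t (interior_subset ht)).hasDerivWithinAt)
    (fun t ht => hnonpos t (interior_subset ht))

end Gradient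

theorem stmt_1_general (d : ℕ)
    (D : Set (EuclideanSpace ℝ (Fin d)))
    (hD_ne : D.Nonempty) (hD_bdd : Bornology.IsBounded D) (hD_open : IsOpen D)
    (V : EuclideanSpace ℝ (Fin d) → ℝ)
    (gradV : EuclideanSpace ℝ (Fin d) → EuclideanSpace ℝ (Fin d))
    (hV : ∀ x ∈ D, HasGradientAt V (gradV x) x)
    (hblow : ∀ M : ℝ, ∃ K : Set (EuclideanSpace ℝ (Fin d)),
      K ⊆ D ∧ IsCompact K ∧ ∀ x ∈ D \ K, M ≤ V x)
    (v : EuclideanSpace ℝ (Fin d)) (hv : v ≠ 0) :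
    ∃ x ∈ D, 0 < ⟪gradV x, v⟫ := by
  by_contra! hcon
  obtain ⟨x₀, hx₀⟩ := hD_ne
  set γ : ℝ → EuclideanSpace ℝ (Fin d) := fun t => x₀ + t • v
  have hγ : Continuous γ := by fun_prop
  obtain ⟨s, hs, hsD⟩ := exists_nonneg_add_smul_notMem hD_bdd x₀ hv
  obtain ⟨T, hT, hmaps, hexit⟩ :=
    exists_pos_mapsTo_Ico_notMem hD_open hγ (by simpa [γ] using hx₀) hs hsD
  have hanti := antitoneOn_comp_add_smul_of_inner_nonpos (convex_Ico 0 T)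
    (fun t ht => hV _ (hmaps ht)) (fun t ht => hcon _ (hmaps ht))
  obtain ⟨K, hKD, hK, hVK⟩ := hblow (V x₀ + 1)
  have hnear : ∀ᶠ t in 𝓝[<] T, γ t ∉ K :=
    nhdsWithin_le_nhds <| hγ.continuousAt.eventually <|
      hK.isClosed.isOpen_compl.mem_nhds fun h => hexit (hKD h)
  obtain ⟨t, htK, ht⟩ := (hnear.and (Ico_mem_nhdsLT hT)).exists
  have hle : V (γ t) ≤ V x₀ := by simpa [γ] using hanti ⟨le_rfl, hT⟩ ht ht.1
  linarith [hVK _ ⟨hmaps ht, htK⟩]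

/-- If `V : D → ℝ` is differentiable on a nonempty bounded open set `D ⊆ ℝ^d` and
`V(x) → +∞` as `x` approaches the boundary of `D`, then for every nonzero `v ∈ ℝ^d`
there is `x ∈ D` with `⟨∇V(x), v⟩ > 0`. -/
theorem stmt_1 (d : ℕ) (hd : 1 ≤ d)
    (D : Set (EuclideanSpace ℝ (Fin d)))
    (hD_ne : D.Nonempty) (hD_bdd : Bornology.IsBounded D) (hD_open : IsOpen D)
    (V : EuclideanSpace ℝ (Fin d) → ℝ)
    (gradV : EuclideanSpace ℝ (Fin d) → EuclideanSpace ℝ (Fin d))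
    (hV : ∀ x ∈ D, HasGradientAt V (gradV x) x)
    (hblow : ∀ M : ℝ, ∃ K : Set (EuclideanSpace ℝ (Fin d)),
      K ⊆ D ∧ IsCompact K ∧ ∀ x ∈ D \ K, M ≤ V x)
    (v : EuclideanSpace ℝ (Fin d)) (hv : v ≠ 0) :
    ∃ x ∈ D, 0 < ⟪gradV x, v⟫ :=
  stmt_1_general d D hD_ne hD_bdd hD_open V gradV hV hblow v hv
end

section
/- Let d ≥ 1, let D ⊆ ℝ^d be a nonempty bounded open set, and let V : D → ℝ be differentiable on D such that V(x) → +∞ as x approaches the boundary of D. Then the set of gradients {∇V(x) : x ∈ D} spans all of ℝ^d as a linear subspace. -/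
/-!
If a nonzero `u` were orthogonal to every gradient, `V` would have zero derivative along the
line `t ↦ x₀ + t • u` wherever the line lies in `D`. The parameters `t` with `x₀ + t • u ∈ D` and
`V (x₀ + t • u) = V x₀` then form an open set, and a closed one, because they lie in the compact
set `K ⊆ D` outside which `V ≥ V x₀ + 1`. Being nonempty, this set is all of `ℝ`, so the whole
line would lie in `K`, which is impossible for a line.
-/

open Set

variable {E : Type*} [NormedAddCommGroup E] [NormedSpace ℝ E]

theorem isClosedEmbedding_const_add_smul {x₀ u : E} (hu : u ≠ 0) :
    Topology.IsClosedEmbedding fun t : ℝ => x₀ + t • u :=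
  (Homeomorph.addLeft x₀).isClosedEmbedding.comp (isClosedEmbedding_smul_left hu)

theorem IsOpen.isOpen_inter_preimage_line_of_fderiv_apply_eq_zero {D : Set E} (hD : IsOpen D)
    {V : E → ℝ} (hV : DifferentiableOn ℝ V D) {u : E} (hflat : ∀ x ∈ D, fderiv ℝ V x u = 0) (x₀ : E)
    (s : Set ℝ) :
    IsOpen ((fun t : ℝ => x₀ + t • u) ⁻¹' D ∩ (fun t => V (x₀ + t • u)) ⁻¹' s) := by
  have hline (t : ℝ) : HasDerivAt (fun t : ℝ => x₀ + t • u) u t := by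
    simpa using ((hasDerivAt_id t).smul_const (𝕜 := ℝ) (𝕜' := ℝ) u).const_add x₀
  refine (hD.preimage (by fun_prop)).isOpen_inter_preimage_of_fderiv_eq_zero (𝕜 := ℝ) ?_
    (fun t ht => ?_) s
  · exact hV.comp (fun t _ => (hline t).differentiableAt.differentiableWithinAt) fun _ ht => ht
  · have := ((hV _ ht).differentiableAt (hD.mem_nhds ht)).hasFDerivAt.comp_hasDerivAt t (hline t)
    rw [hflat _ ht] at this
    exact this.hasFDerivAt.fderiv.trans (by simp)

theorem exists_fderiv_apply_ne_zero_of_forall_le_off_compact {D : Set E} (hD : IsOpen D)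
    {x₀ : E} (hx₀ : x₀ ∈ D) {V : E → ℝ} (hV : DifferentiableOn ℝ V D)
    (hblow : ∀ M : ℝ, ∃ K ⊆ D, IsCompact K ∧ ∀ x ∈ D \ K, M ≤ V x) {u : E} (hu : u ≠ 0) :
    ∃ x ∈ D, fderiv ℝ V x u ≠ 0 := by
  by_contra! hflat
  set g : ℝ → E := fun t => x₀ + t • u
  have hg : Topology.IsClosedEmbedding g := isClosedEmbedding_const_add_smul hu
  obtain ⟨K, hKD, hK, hKV⟩ := hblow (V x₀ + 1)
  have hlevel : g ⁻¹' D ∩ (V ∘ g) ⁻¹' {V x₀} = g ⁻¹' K ∩ (V ∘ g) ⁻¹' {V x₀} := by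
    ext t
    simp only [mem_inter_iff, mem_preimage, mem_singleton_iff, Function.comp_apply]
    refine ⟨fun ⟨htD, htV⟩ => ⟨by_contra fun htK => ?_, htV⟩, fun ⟨htK, htV⟩ => ⟨hKD htK, htV⟩⟩
    linarith [hKV _ ⟨htD, htK⟩]
  have hclopen : IsClopen (g ⁻¹' D ∩ (V ∘ g) ⁻¹' {V x₀}) := by
    refine ⟨hlevel ▸ ContinuousOn.preimage_isClosed_of_isClosed ?_ ?_ isClosed_singleton,
      hD.isOpen_inter_preimage_line_of_fderiv_apply_eq_zero hV hflat x₀ _⟩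
    · exact hV.continuousOn.comp hg.continuous.continuousOn fun _ ht => hKD ht
    · exact hK.isClosed.preimage hg.continuous
  have huniv := hclopen.eq_univ ⟨0, by simpa [g] using hx₀⟩
  have hline_in_K : univ ⊆ g ⁻¹' K := by
    rw [← huniv, hlevel]
    exact inter_subset_left
  exact noncompact_univ ℝ <|
    (hg.isCompact_preimage hK).of_isClosed_subset isClosed_univ hline_in_K

theorem stmt_2_general (d : ℕ)
    (D : Set (EuclideanSpace ℝ (Fin d)))
    (hD_ne : D.Nonempty) (hD_open : IsOpen D)
    (V : EuclideanSpace ℝ (Fin d) → ℝ)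
    (gradV : EuclideanSpace ℝ (Fin d) → EuclideanSpace ℝ (Fin d))
    (hV : ∀ x ∈ D, HasGradientAt V (gradV x) x)
    (hblow : ∀ M : ℝ, ∃ K : Set (EuclideanSpace ℝ (Fin d)),
      K ⊆ D ∧ IsCompact K ∧ ∀ x ∈ D \ K, M ≤ V x) :
    Submodule.span ℝ (gradV '' D) = ⊤ := by
  rw [← Submodule.orthogonal_eq_bot_iff, Submodule.eq_bot_iff]
  intro u hu
  by_contra hu_ne
  obtain ⟨x₀, hx₀⟩ := hD_ne
  obtain ⟨x, hx, hne⟩ := exists_fderiv_apply_ne_zero_of_forall_le_off_compact hD_open hx₀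
    (fun x hx => (hV x hx).differentiableAt.differentiableWithinAt) hblow hu_ne
  refine hne ?_
  rw [(hV x hx).hasFDerivAt.fderiv, InnerProductSpace.toDual_apply_apply]
  exact (Submodule.mem_orthogonal _ u).mp hu _ (Submodule.subset_span ⟨x, hx, rfl⟩)

/-- If `V : D → ℝ` is differentiable on a nonempty bounded open set `D ⊆ ℝ^d` and
`V(x) → +∞` as `x` approaches the boundary of `D`, then the gradients
`{∇V(x) : x ∈ D}` span all of `ℝ^d`. -/
theorem stmt_2 (d : ℕ) (hd : 1 ≤ d)
    (D : Set (EuclideanSpace ℝ (Fin d)))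
    (hD_ne : D.Nonempty) (hD_bdd : Bornology.IsBounded D) (hD_open : IsOpen D)
    (V : EuclideanSpace ℝ (Fin d) → ℝ)
    (gradV : EuclideanSpace ℝ (Fin d) → EuclideanSpace ℝ (Fin d))
    (hV : ∀ x ∈ D, HasGradientAt V (gradV x) x)
    (hblow : ∀ M : ℝ, ∃ K : Set (EuclideanSpace ℝ (Fin d)),
      K ⊆ D ∧ IsCompact K ∧ ∀ x ∈ D \ K, M ≤ V x) :
    Submodule.span ℝ (gradV '' D) = ⊤ :=
  stmt_2_general d D hD_ne hD_open V gradV hV hblow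
end

section
/- Let d ≥ 1, let D ⊆ ℝ^d be a nonempty bounded open set, and let V : D → ℝ be differentiable on D such that V(x) → +∞ as x approaches the boundary of D. Then there exist finitely many points x₁, …, x_ℓ ∈ D such that the positive cone generated by ∇V(x₁), …, ∇V(x_ℓ) is all of ℝ^d; that is, for every y ∈ ℝ^d there exist nonnegative reals α₁, …, α_ℓ with y = Σ_{i=1}^{ℓ} α_i ∇V(x_i). -/
/-!
Since `D` is bounded, `V - ⟪y, ·⟫` still tends to `+∞` at the boundary of `D` for every `y`, so it
attains its minimum at an interior point, where `∇V = y`. Thus `∇V` maps `D` onto `ℝ^d`, and the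
gradients at preimages of `±eⱼ` for a basis `(eⱼ)` positively span `ℝ^d`.
-/

open RealInnerProductSpace

def TendstoAtTopAtBoundary {X : Type*} [TopologicalSpace X] (f : X → ℝ) (D : Set X) : Prop :=
  ∀ M : ℝ, ∃ K ⊆ D, IsCompact K ∧ ∀ x ∈ D \ K, M ≤ f x

namespace TendstoAtTopAtBoundary

variable {X : Type*} [TopologicalSpace X] {f g : X → ℝ} {D : Set X}

theorem sub_of_le {C : ℝ} (hf : TendstoAtTopAtBoundary f D) (hg : ∀ x ∈ D, g x ≤ C) :
    TendstoAtTopAtBoundary (f - g) D := by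
  intro M
  obtain ⟨K, hKD, hK, hfM⟩ := hf (M + C)
  refine ⟨K, hKD, hK, fun x hx => ?_⟩
  simp only [Pi.sub_apply]
  linarith [hg x hx.1, hfM x hx]

theorem exists_isMinOn (hf : TendstoAtTopAtBoundary f D) (hD : D.Nonempty)
    (hcont : ContinuousOn f D) : ∃ z ∈ D, IsMinOn f D z := by
  obtain ⟨x₀, hx₀⟩ := hD
  obtain ⟨K, hKD, hK, hfK⟩ := hf (f x₀)
  have hKD' : insert x₀ K ⊆ D := Set.insert_subset hx₀ hKD
  obtain ⟨z, hz, hzmin⟩ :=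
    (hK.insert x₀).exists_isMinOn (Set.insert_nonempty x₀ K) (hcont.mono hKD')
  refine ⟨z, hKD' hz, fun x hx => ?_⟩
  by_cases hxK : x ∈ insert x₀ K
  · exact hzmin hxK
  · exact (hzmin (Set.mem_insert x₀ K)).trans
      (hfK x ⟨hx, fun h => hxK (Set.mem_insert_of_mem x₀ h)⟩)

end TendstoAtTopAtBoundary

theorem IsLocalMin.hasGradientAt_eq_zero {E : Type*} [NormedAddCommGroup E]
    [InnerProductSpace ℝ E] [CompleteSpace E] {f : E → ℝ} {f' a : E}
    (h : IsLocalMin f a) (hf : HasGradientAt f f' a) : f' = 0 := by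
  simpa using h.hasFDerivAt_eq_zero hf.hasFDerivAt

section Gradient

variable {E : Type*} [NormedAddCommGroup E] [InnerProductSpace ℝ E] [CompleteSpace E]
  {D : Set E} {V : E → ℝ} {gradV : E → E}

theorem hasGradientAt_sub_inner {x : E} (y : E) (hV : HasGradientAt V (gradV x) x) :
    HasGradientAt (fun x => V x - ⟪y, x⟫) (gradV x - y) x := by
  rw [hasGradientAt_iff_hasFDerivAt] at hV ⊢
  refine (hV.sub (innerSL ℝ y).hasFDerivAt).congr_fderiv ?_
  rw [map_sub]
  rfl

theorem surjOn_gradient_of_tendstoAtTopAtBoundary (hD_ne : D.Nonempty)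
    (hD_bdd : Bornology.IsBounded D) (hD_open : IsOpen D)
    (hV : ∀ x ∈ D, HasGradientAt V (gradV x) x) (hblow : TendstoAtTopAtBoundary V D) :
    Set.SurjOn gradV D Set.univ := by
  intro y _
  obtain ⟨R, hR⟩ := hD_bdd.subset_closedBall 0
  have hW := fun x hx => hasGradientAt_sub_inner y (hV x hx)
  have hinner : ∀ x ∈ D, ⟪y, x⟫ ≤ ‖y‖ * R := fun x hx =>
    (real_inner_le_norm y x).trans <| mul_le_mul_of_nonneg_left
      (by simpa using hR hx) (norm_nonneg y)
  obtain ⟨z, hz, hmin⟩ := (hblow.sub_of_le hinner).exists_isMinOn hD_ne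
    fun x hx => (hW x hx).differentiableAt.continuousAt.continuousWithinAt
  exact ⟨z, hz, sub_eq_zero.mp <|
    (hmin.isLocalMin (hD_open.mem_nhds hz)).hasGradientAt_eq_zero (hW z hz)⟩

end Gradient

theorem Module.Basis.exists_nonneg_sum_smul_elim_neg {ι R M : Type*} [Fintype ι] [Ring R]
    [LinearOrder R] [IsOrderedRing R] [AddCommGroup M] [Module R M] (b : Basis ι R M) (y : M) :
    ∃ α : ι ⊕ ι → R, (∀ s, 0 ≤ α s) ∧ y = ∑ s, α s • Sum.elim b (-⇑b) s := by
  refine ⟨Sum.elim (fun j => max (b.repr y j) 0) (fun j => max (-b.repr y j) 0), ?_, ?_⟩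
  · rintro (j | j) <;> simp
  · have hsplit : ∀ j, max (b.repr y j) 0 • b j + max (-b.repr y j) 0 • -b j = b.repr y j • b j :=
      fun j => by rw [smul_neg, ← sub_eq_add_neg, ← sub_smul, max_zero_sub_max_neg_zero_eq_self]
    simp only [Fintype.sum_sum_type, Sum.elim_inl, Sum.elim_inr, Pi.neg_apply,
      ← Finset.sum_add_distrib, hsplit, b.sum_repr]

theorem exists_fin_nonneg_sum_smul_of_surjOn {X R E : Type*} [Ring R] [LinearOrder R]
    [IsOrderedRing R] [AddCommGroup E] [Module R E] [Module.Free R E] [Module.Finite R E]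
    {g : X → E} {D : Set X} (hg : Set.SurjOn g D Set.univ) :
    ∃ (ℓ : ℕ) (x : Fin ℓ → X), (∀ i, x i ∈ D) ∧
      ∀ y : E, ∃ α : Fin ℓ → R, (∀ i, 0 ≤ α i) ∧ y = ∑ i, α i • g (x i) := by
  choose F hFD hgF using fun y => hg (Set.mem_univ y)
  let b := Module.Free.chooseBasis R E
  let e := Fintype.equivFin (Module.Free.ChooseBasisIndex R E ⊕ Module.Free.ChooseBasisIndex R E)
  refine ⟨_, fun i => F (Sum.elim b (-⇑b) (e.symm i)), fun i => hFD _, fun y => ?_⟩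
  obtain ⟨α, hα, hy⟩ := b.exists_nonneg_sum_smul_elim_neg y
  refine ⟨fun i => α (e.symm i), fun i => hα _, ?_⟩
  simp only [hgF]
  rw [hy, e.symm.sum_comp (fun s => α s • Sum.elim b (-⇑b) s)]

theorem stmt_3_general (d : ℕ)
    (D : Set (EuclideanSpace ℝ (Fin d)))
    (hD_ne : D.Nonempty) (hD_bdd : Bornology.IsBounded D) (hD_open : IsOpen D)
    (V : EuclideanSpace ℝ (Fin d) → ℝ)
    (gradV : EuclideanSpace ℝ (Fin d) → EuclideanSpace ℝ (Fin d))
    (hV : ∀ x ∈ D, HasGradientAt V (gradV x) x)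
    (hblow : ∀ M : ℝ, ∃ K : Set (EuclideanSpace ℝ (Fin d)),
      K ⊆ D ∧ IsCompact K ∧ ∀ x ∈ D \ K, M ≤ V x) :
    ∃ (ℓ : ℕ) (x : Fin ℓ → EuclideanSpace ℝ (Fin d)),
      (∀ i, x i ∈ D) ∧
      ∀ y : EuclideanSpace ℝ (Fin d), ∃ α : Fin ℓ → ℝ,
        (∀ i, 0 ≤ α i) ∧ y = ∑ i, α i • gradV (x i) :=
  exists_fin_nonneg_sum_smul_of_surjOn
    (surjOn_gradient_of_tendstoAtTopAtBoundary hD_ne hD_bdd hD_open hV hblow)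

/-- If `V : D → ℝ` is differentiable on a nonempty bounded open set `D ⊆ ℝ^d` and
`V(x) → +∞` as `x` approaches the boundary of `D`, then there exist finitely many
points `x₁, …, x_ℓ ∈ D` such that the positive cone generated by the gradients
`∇V(x₁), …, ∇V(x_ℓ)` is all of `ℝ^d`. -/
theorem stmt_3 (d : ℕ) (hd : 1 ≤ d)
    (D : Set (EuclideanSpace ℝ (Fin d)))
    (hD_ne : D.Nonempty) (hD_bdd : Bornology.IsBounded D) (hD_open : IsOpen D)
    (V : EuclideanSpace ℝ (Fin d) → ℝ)
    (gradV : EuclideanSpace ℝ (Fin d) → EuclideanSpace ℝ (Fin d))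
    (hV : ∀ x ∈ D, HasGradientAt V (gradV x) x)
    (hblow : ∀ M : ℝ, ∃ K : Set (EuclideanSpace ℝ (Fin d)),
      K ⊆ D ∧ IsCompact K ∧ ∀ x ∈ D \ K, M ≤ V x) :
    ∃ (ℓ : ℕ) (x : Fin ℓ → EuclideanSpace ℝ (Fin d)),
      (∀ i, x i ∈ D) ∧
      ∀ y : EuclideanSpace ℝ (Fin d), ∃ α : Fin ℓ → ℝ,
        (∀ i, 0 ≤ α i) ∧ y = ∑ i, α i • gradV (x i) :=
  stmt_3_general d D hD_ne hD_bdd hD_open V gradV hV hblow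
end

section
/- Let d ≥ 1, let D ⊆ ℝ^d be a nonempty bounded open set, and let V : D → ℝ be differentiable on D such that V(x) → +∞ as x approaches the boundary of D. Let Γ be an invertible real d×d matrix and let ρ₂ : ℝ^d → ℝ be differentiable and positive everywhere. Suppose that for every x ∈ D and y ∈ ℝ^d one has ρ₂(y)·⟨∇V(x), y⟩ + (1/2)·⟨Γ ∇V(x), ∇ρ₂(y)⟩ = 0. Then Γ is symmetric and ρ₂(y) = ρ₂(0)·exp(−⟨Γ^{-1} y, y⟩) for every y ∈ ℝ^d. -/
/-! If `w` were orthogonal to every `∇V(x)`, `x ∈ D`, then `V` would be constant along the line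
through a point of `D` in direction `w` for as long as it stays in `D`; since `V` blows up at the
boundary, the line could never leave `D`, contradicting boundedness. So the gradients of `V`
span, and the stationarity identity, an inner product with `∇V(x)`, yields
`∇ρ₂(y) = -2ρ₂(y) A y` with `A = Γᵀ⁻¹`. Integrating along segments gives
`ρ₂(a + h) = ρ₂(a) exp(-(2⟨Aa, h⟩ + ⟨Ah, h⟩))`; computing `ρ₂(y + z)` in the two possible ways
forces `A` to be symmetric, and `a = 0` is the Gaussian formula. -/

open scoped RealInnerProductSpace Matrix

open Set

section Blowup

variable {E : Type*} [NormedAddCommGroup E] [NormedSpace ℝ E]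

theorem IsOpen.eq_univ_of_hasFDerivAt_zero {U : Set E} {g : E → ℝ} (hU : IsOpen U)
    (hne : U.Nonempty) (hg : ∀ x ∈ U, HasFDerivAt g (0 : E →L[ℝ] ℝ) x)
    (hblow : ∀ M : ℝ, ∃ C ⊆ U, IsClosed C ∧ ∀ x ∈ U \ C, M ≤ g x) : U = univ := by
  obtain ⟨x₀, hx₀⟩ := hne
  obtain ⟨C, hCU, hC, hCg⟩ := hblow (g x₀ + 1)
  -- The level set of `g` through `x₀` is open since `g` is locally constant on `U`, and it is
  -- closed because it cannot leave the closed set `C` on which `g` has not yet grown.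
  have hlevel : U ∩ g ⁻¹' {g x₀} = C ∩ g ⁻¹' {g x₀} := by
    refine Subset.antisymm (fun x ⟨hxU, hx⟩ => ⟨?_, hx⟩) (inter_subset_inter_left _ hCU)
    by_contra hxC
    linarith [hCg x ⟨hxU, hxC⟩, mem_singleton_iff.mp hx]
  have hopen : IsOpen (U ∩ g ⁻¹' {g x₀}) :=
    hU.isOpen_inter_preimage_of_fderiv_eq_zero
      (fun x hx => (hg x hx).differentiableAt.differentiableWithinAt)
      (fun x hx => (hg x hx).fderiv) _
  have hclosed : IsClosed (U ∩ g ⁻¹' {g x₀}) := by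
    rw [hlevel]
    exact ContinuousOn.preimage_isClosed_of_isClosed
      (fun x hx => (hg x (hCU hx)).continuousAt.continuousWithinAt) hC isClosed_singleton
  have hall := IsClopen.eq_univ ⟨hclosed, hopen⟩ ⟨x₀, hx₀, rfl⟩
  exact eq_univ_of_univ_subset (hall ▸ inter_subset_left)

theorem Bornology.IsBounded.eq_zero_of_forall_add_smul_mem {D : Set E} (hD : IsBounded D)
    {x₀ w : E} (hline : ∀ t : ℝ, x₀ + t • w ∈ D) : w = 0 := by
  by_contra hw
  obtain ⟨R, hR⟩ := hD.exists_norm_le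
  set t := (R + ‖x₀‖ + 1) / ‖w‖
  have hnorm : ‖t • w‖ = |R + ‖x₀‖ + 1| := by
    rw [norm_smul, Real.norm_eq_abs, abs_div, abs_norm,
      div_mul_cancel₀ _ (norm_ne_zero_iff.mpr hw)]
  have hle : ‖t • w‖ ≤ R + ‖x₀‖ := by
    simpa using (norm_sub_le (x₀ + t • w) x₀).trans (add_le_add_left (hR _ (hline t)) _)
  linarith [le_abs_self (R + ‖x₀‖ + 1)]

theorem eq_zero_of_forall_fderiv_apply_eq_zero {D : Set E} (hD_ne : D.Nonempty)
    (hD_bdd : Bornology.IsBounded D) (hD_open : IsOpen D) {V : E → ℝ} {V' : E → E →L[ℝ] ℝ}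
    (hV : ∀ x ∈ D, HasFDerivAt V (V' x) x)
    (hblow : ∀ M : ℝ, ∃ K ⊆ D, IsCompact K ∧ ∀ x ∈ D \ K, M ≤ V x)
    {w : E} (hw : ∀ x ∈ D, V' x w = 0) : w = 0 := by
  obtain ⟨x₀, hx₀⟩ := hD_ne
  set L : ℝ → E := fun t => x₀ + t • w
  have hL : Continuous L := by fun_prop
  have hline : L ⁻¹' D = univ := by
    refine (hD_open.preimage hL).eq_univ_of_hasFDerivAt_zero (g := V ∘ L)
      ⟨0, by simpa [L] using hx₀⟩ (fun t ht => ?_) (fun M => ?_)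
    · have hLt : HasDerivAt L w t := by
        simpa only [one_smul] using ((hasDerivAt_id' t).smul_const w).const_add x₀
      have := (hV _ ht).comp_hasDerivAt t hLt
      rw [hw _ ht] at this
      simpa using this.hasFDerivAt
    · obtain ⟨K, hKD, hK, hKV⟩ := hblow M
      exact ⟨L ⁻¹' K, preimage_mono hKD, hK.isClosed.preimage hL, fun t ht => hKV _ ht⟩
  exact hD_bdd.eq_zero_of_forall_add_smul_mem (eq_univ_iff_forall.mp hline)

end Blowup

theorem eq_mul_exp_sub_of_hasDerivAt {f φ φ' : ℝ → ℝ} (hφ : ∀ t, HasDerivAt φ (φ' t) t)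
    (hf : ∀ t, HasDerivAt f (φ' t * f t) t) (a b : ℝ) :
    f b = f a * Real.exp (φ b - φ a) := by
  have hconst : ∀ t, HasDerivAt (fun t => f t * Real.exp (-φ t)) 0 t := fun t =>
    ((hf t).mul (hφ t).neg.exp).congr_deriv (by simp only [Pi.neg_apply]; ring)
  have := is_const_of_deriv_eq_zero (fun t => (hconst t).differentiableAt)
    (fun t => (hconst t).deriv) b a
  rw [Real.exp_sub, ← mul_div_assoc, eq_div_iff (Real.exp_pos _).ne']
  simp only [Real.exp_neg] at this
  field_simp at this
  linarith

section Gaussian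

variable {E : Type*} [NormedAddCommGroup E] [InnerProductSpace ℝ E] [CompleteSpace E]
  {f : E → ℝ} {A : E →ₗ[ℝ] E}

theorem apply_add_eq_mul_exp_of_hasGradientAt (hf : ∀ y, HasGradientAt f (-(2 * f y) • A y) y)
    (a h : E) : f (a + h) = f a * Real.exp (-(2 * ⟪A a, h⟫ + ⟪A h, h⟫)) := by
  have hline : ∀ t : ℝ, HasDerivAt (fun t : ℝ => a + t • h) h t := fun t => by
    simpa only [one_smul] using ((hasDerivAt_id' t).smul_const h).const_add a
  have hφ : ∀ t : ℝ, HasDerivAt (fun t : ℝ => -(2 * t * ⟪A a, h⟫ + t ^ 2 * ⟪A h, h⟫))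
      (-(2 * ⟪A a, h⟫ + 2 * t * ⟪A h, h⟫)) t := fun t =>
    ((((hasDerivAt_id' t).const_mul 2).mul_const ⟪A a, h⟫).add
      ((hasDerivAt_pow 2 t).mul_const ⟪A h, h⟫)).neg.congr_deriv (by ring)
  have hf' : ∀ t : ℝ, HasDerivAt (fun t : ℝ => f (a + t • h))
      (-(2 * ⟪A a, h⟫ + 2 * t * ⟪A h, h⟫) * f (a + t • h)) t := fun t =>
    ((hf (a + t • h)).hasFDerivAt.comp_hasDerivAt t (hline t)).congr_deriv (by
      rw [InnerProductSpace.toDual_apply_apply, real_inner_smul_left, map_add, map_smul,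
        inner_add_left, real_inner_smul_left]
      ring)
  simpa using eq_mul_exp_sub_of_hasDerivAt hφ hf' 0 1

theorem eq_mul_exp_of_hasGradientAt (hf : ∀ y, HasGradientAt f (-(2 * f y) • A y) y) (y : E) :
    f y = f 0 * Real.exp (-⟪A y, y⟫) := by
  simpa using apply_add_eq_mul_exp_of_hasGradientAt hf 0 y

theorem isSymmetric_of_hasGradientAt (hf : ∀ y, HasGradientAt f (-(2 * f y) • A y) y)
    (hf0 : f 0 ≠ 0) : A.IsSymmetric := by
  intro y z
  have hzy := apply_add_eq_mul_exp_of_hasGradientAt hf z y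
  rw [add_comm z y, apply_add_eq_mul_exp_of_hasGradientAt hf y z,
    eq_mul_exp_of_hasGradientAt hf y, eq_mul_exp_of_hasGradientAt hf z,
    mul_assoc, mul_assoc, ← Real.exp_add, ← Real.exp_add] at hzy
  have := Real.exp_injective (mul_left_cancel₀ hf0 hzy)
  rw [real_inner_comm (A z) y]
  linarith

end Gaussian

namespace Matrix

variable {n : Type*} [Fintype n] [DecidableEq n]

theorem inner_toEuclideanLin (M : Matrix n n ℝ) (u v : EuclideanSpace ℝ n) :
    ⟪M.toEuclideanLin u, v⟫ = ⟪u, Mᵀ.toEuclideanLin v⟫ := by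
  rw [← conjTranspose_eq_transpose_of_trivial, toEuclideanLin_conjTranspose_eq_adjoint,
    LinearMap.adjoint_inner_right]

theorem toEuclideanLin_inv_apply_toEuclideanLin {M : Matrix n n ℝ} (hM : IsUnit M.det)
    (v : EuclideanSpace ℝ n) : M⁻¹.toEuclideanLin (M.toEuclideanLin v) = v := by
  rw [← LinearMap.comp_apply, ← toLpLin_mul_same, nonsing_inv_mul _ hM, toLpLin_one,
    LinearMap.id_apply]

theorem isSymm_of_isSymmetric_toEuclideanLin_transpose_inv {M : Matrix n n ℝ}
    (hM : IsUnit M.det) (h : Mᵀ⁻¹.toEuclideanLin.IsSymmetric) : M.IsSymm := by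
  have hinv := (isHermitian_iff_isSymm.mp (isSymmetric_toEuclideanLin_iff.mp h)).inv
  rw [nonsing_inv_nonsing_inv _ (by rwa [det_transpose])] at hinv
  simpa using hinv.transpose

end Matrix

theorem stmt_6_general (d : ℕ)
    (D : Set (EuclideanSpace ℝ (Fin d)))
    (hD_ne : D.Nonempty) (hD_bdd : Bornology.IsBounded D) (hD_open : IsOpen D)
    (V : EuclideanSpace ℝ (Fin d) → ℝ)
    (gradV : EuclideanSpace ℝ (Fin d) → EuclideanSpace ℝ (Fin d))
    (hV : ∀ x ∈ D, HasGradientAt V (gradV x) x)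
    (hblow : ∀ M : ℝ, ∃ K : Set (EuclideanSpace ℝ (Fin d)),
      K ⊆ D ∧ IsCompact K ∧ ∀ x ∈ D \ K, M ≤ V x)
    (Γ : Matrix (Fin d) (Fin d) ℝ) (hΓ_inv : IsUnit Γ.det)
    (ρ₂ : EuclideanSpace ℝ (Fin d) → ℝ)
    (gρ : EuclideanSpace ℝ (Fin d) → EuclideanSpace ℝ (Fin d))
    (hρ_pos : ∀ y, 0 < ρ₂ y)
    (hρ_grad : ∀ y, HasGradientAt ρ₂ (gρ y) y)
    (heq : ∀ x ∈ D, ∀ y : EuclideanSpace ℝ (Fin d),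
      ρ₂ y * ⟪gradV x, y⟫ +
        (1/2 : ℝ) * ⟪(EuclideanSpace.equiv (Fin d) ℝ).symm
          (Γ.mulVec (fun i => gradV x i)), gρ y⟫ = 0) :
    Γ.transpose = Γ ∧
      ∀ y : EuclideanSpace ℝ (Fin d),
        ρ₂ y = ρ₂ 0 *
          Real.exp (-⟪(EuclideanSpace.equiv (Fin d) ℝ).symm (Γ⁻¹.mulVec (fun i => y i)), y⟫) := by
  have hstat : ∀ y, ρ₂ y • y + (1/2 : ℝ) • Γᵀ.toEuclideanLin (gρ y) = 0 := fun y =>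
    eq_zero_of_forall_fderiv_apply_eq_zero hD_ne hD_bdd hD_open
      (fun x hx => (hV x hx).hasFDerivAt) hblow fun x hx => by
        rw [InnerProductSpace.toDual_apply_apply, inner_add_right, real_inner_smul_right,
          real_inner_smul_right, ← Matrix.inner_toEuclideanLin]
        exact heq x hx y
  have hgrad : ∀ y, gρ y = -(2 * ρ₂ y) • Γᵀ⁻¹.toEuclideanLin y := fun y => by
    have hΓt : IsUnit Γᵀ.det := by rwa [Matrix.det_transpose]
    have hΓg : Γᵀ.toEuclideanLin (gρ y) = -(2 * ρ₂ y) • y := by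
      linear_combination (norm := module) (2 : ℝ) • hstat y
    rw [← Matrix.toEuclideanLin_inv_apply_toEuclideanLin hΓt (gρ y), hΓg, map_smul]
  have hρ : ∀ y, HasGradientAt ρ₂ (-(2 * ρ₂ y) • Γᵀ⁻¹.toEuclideanLin y) y := fun y =>
    hgrad y ▸ hρ_grad y
  have hΓ : Γᵀ = Γ :=
    Matrix.isSymm_of_isSymmetric_toEuclideanLin_transpose_inv hΓ_inv
      (isSymmetric_of_hasGradientAt hρ (hρ_pos 0).ne')
  refine ⟨hΓ, fun y => ?_⟩
  rw [← hΓ]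
  exact eq_mul_exp_of_hasGradientAt hρ y

/-- Let `V` be differentiable on a nonempty bounded open `D ⊆ ℝ^d` blowing up at the
boundary, `Γ` an invertible matrix, and `ρ₂ > 0` differentiable, satisfying
`ρ₂(y)⟨∇V(x), y⟩ + (1/2)⟨Γ∇V(x), ∇ρ₂(y)⟩ = 0` for all `x ∈ D`, `y ∈ ℝ^d`.
Then `Γ` is symmetric and `ρ₂(y) = ρ₂(0)·exp(−⟨Γ⁻¹y, y⟩)`. -/
theorem stmt_6 (d : ℕ) (hd : 1 ≤ d)
    (D : Set (EuclideanSpace ℝ (Fin d)))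
    (hD_ne : D.Nonempty) (hD_bdd : Bornology.IsBounded D) (hD_open : IsOpen D)
    (V : EuclideanSpace ℝ (Fin d) → ℝ)
    (gradV : EuclideanSpace ℝ (Fin d) → EuclideanSpace ℝ (Fin d))
    (hV : ∀ x ∈ D, HasGradientAt V (gradV x) x)
    (hblow : ∀ M : ℝ, ∃ K : Set (EuclideanSpace ℝ (Fin d)),
      K ⊆ D ∧ IsCompact K ∧ ∀ x ∈ D \ K, M ≤ V x)
    (Γ : Matrix (Fin d) (Fin d) ℝ) (hΓ_inv : IsUnit Γ.det)
    (ρ₂ : EuclideanSpace ℝ (Fin d) → ℝ)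
    (gρ : EuclideanSpace ℝ (Fin d) → EuclideanSpace ℝ (Fin d))
    (hρ_pos : ∀ y, 0 < ρ₂ y)
    (hρ_grad : ∀ y, HasGradientAt ρ₂ (gρ y) y)
    (heq : ∀ x ∈ D, ∀ y : EuclideanSpace ℝ (Fin d),
      ρ₂ y * ⟪gradV x, y⟫ +
        (1/2 : ℝ) * ⟪(EuclideanSpace.equiv (Fin d) ℝ).symm
          (Γ.mulVec (fun i => gradV x i)), gρ y⟫ = 0) :
    Γ.transpose = Γ ∧
      ∀ y : EuclideanSpace ℝ (Fin d),
        ρ₂ y = ρ₂ 0 *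
          Real.exp (-⟪(EuclideanSpace.equiv (Fin d) ℝ).symm (Γ⁻¹.mulVec (fun i => y i)), y⟫) :=
  stmt_6_general d D hD_ne hD_bdd hD_open V gradV hV hblow Γ hΓ_inv ρ₂ gρ hρ_pos hρ_grad heq
end

section
/- Let D ⊆ ℝ^d be an open set, let V : D → ℝ be continuously differentiable, and let Γ be a symmetric positive definite real d×d matrix. Then for every twice continuously differentiable function f : ℝ^d × ℝ^d → ℝ with compact support contained in D × ℝ^d, one has ∫_{D×ℝ^d} [ (1/2)Δ_x f(x,y) − (1/2)⟨∇V(x), ∇_x f(x,y)⟩ + ⟨y, ∇_x f(x,y)⟩ − (1/2)⟨Γ ∇V(x), ∇_y f(x,y)⟩ ] · exp(−V(x) − ⟨Γ^{-1} y, y⟩) dx dy = 0. -/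
/-!
Write `w(x, y) = exp (-V x - ⟪Γ⁻¹ y, y⟫)`, subtract `f ⟪∇V, y⟫ w` from the part of the integrand
that differentiates in `x` and add it to the part that differentiates in `y`. Both parts are then
divergences of compactly supported `C¹` fields: the `x`-part is `∑ᵢ ∂_{xᵢ} ((½ ∂_{xᵢ} f + yᵢ f) w)`,
and, since `∇_y ⟪Γ⁻¹ y, y⟫ = 2 Γ⁻¹ y` and `⟪Γ ∇V, Γ⁻¹ y⟫ = ⟪∇V, y⟫` for symmetric `Γ`, the
`y`-part is `-½ ∑ᵢ ∂_{yᵢ} ((Γ ∇V)ᵢ f w)`. By Fubini the first integrates to zero along every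
`x`-slice and the second along every `y`-slice. The fields are `C¹` on the whole space although
`V` is only `C¹` on `D`, because `f` vanishes near the complement of `D × ℝᵈ`.
-/

open scoped RealInnerProductSpace
open MeasureTheory

section CompactSupport

variable {E : Type*} [NormedAddCommGroup E] [NormedSpace ℝ E] [MeasurableSpace E]
  [BorelSpace E] {μ : Measure E} {u : E → ℝ}

theorem HasCompactSupport.integrable_fderiv_apply [IsFiniteMeasureOnCompacts μ]
    (h'u : HasCompactSupport u) (hu : ContDiff ℝ 1 u) (v : E) :
    Integrable (fun x => fderiv ℝ u x v) μ :=
  ((hu.continuous_fderiv one_ne_zero).clm_apply continuous_const).integrable_of_hasCompactSupport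
    (h'u.fderiv_apply ℝ v)

variable [FiniteDimensional ℝ E] [μ.IsAddHaarMeasure]

theorem HasCompactSupport.integral_fderiv_apply_eq_zero (h'u : HasCompactSupport u)
    (hu : ContDiff ℝ 1 u) (v : E) : ∫ x, fderiv ℝ u x v ∂μ = 0 := by
  simpa using integral_mul_fderiv_eq_neg_fderiv_mul_of_integrable (μ := μ)
    (f := fun _ => (1 : ℝ)) (by simp) (by simpa using h'u.integrable_fderiv_apply hu v)
    (by simpa using hu.continuous.integrable_of_hasCompactSupport h'u)
    (fun _ _ => differentiableAt_const _) (fun x _ => hu.differentiable one_ne_zero x)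

theorem integral_sum_fderiv_apply_eq_zero {ι : Type*} (s : Finset ι) {u : ι → E → ℝ}
    (hu : ∀ i, ContDiff ℝ 1 (u i)) (h'u : ∀ i, HasCompactSupport (u i)) (v : ι → E) :
    ∫ x, ∑ i ∈ s, fderiv ℝ (u i) x (v i) ∂μ = 0 := by
  rw [integral_finsetSum s fun i _ => (h'u i).integrable_fderiv_apply (hu i) (v i)]
  exact Finset.sum_eq_zero fun i _ => (h'u i).integral_fderiv_apply_eq_zero (hu i) (v i)

end CompactSupport

theorem ContDiffOn.contDiff_of_tsupport_subset {E F : Type*} [NormedAddCommGroup E]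
    [NormedSpace ℝ E] [NormedAddCommGroup F] [NormedSpace ℝ F] {n : WithTop ℕ∞} {f : E → F}
    {s : Set E} (hf : ContDiffOn ℝ n f s) (hs : IsOpen s) (h : tsupport f ⊆ s) :
    ContDiff ℝ n f := by
  refine contDiff_iff_contDiffAt.2 fun x => ?_
  by_cases hx : x ∈ s
  · exact hf.contDiffAt (hs.mem_nhds hx)
  · exact contDiffAt_const.congr_of_eventuallyEq
      (notMem_tsupport_iff_eventuallyEq.1 fun h' => hx (h h'))

theorem contDiff_mul_exp_neg {E : Type*} [NormedAddCommGroup E] [NormedSpace ℝ E] {D : Set E}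
    {V h : E → ℝ} (hD : IsOpen D) (hV : ContDiffOn ℝ 1 V D)
    (hh : ContDiff ℝ 1 h) (hhD : tsupport h ⊆ D) :
    ContDiff ℝ 1 fun x => h x * Real.exp (-V x) :=
  (hh.contDiffOn.mul hV.neg.exp).contDiff_of_tsupport_subset hD
    (tsupport_mul_subset_left.trans hhD)

theorem ContinuousOn.integrable_of_eq_zero_of_isCompact {X : Type*} [TopologicalSpace X]
    [T2Space X] [MeasurableSpace X] [OpensMeasurableSpace X] {μ : Measure X}
    [IsFiniteMeasureOnCompacts μ] {F : X → ℝ} {U K : Set X} (hF : ContinuousOn F U)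
    (hU : IsOpen U) (hK : IsCompact K) (hKU : K ⊆ U) (hFK : ∀ x ∉ K, F x = 0) :
    Integrable F μ :=
  (hF.continuous_of_tsupport_subset hU <|
    (closure_minimal (Function.support_subset_iff'.2 hFK) hK.isClosed).trans hKU)
    |>.integrable_of_hasCompactSupport (.intro hK hFK)

section Slices

variable {X Y α : Type*} [TopologicalSpace X] [TopologicalSpace Y] [Zero α] {f : X × Y → α}

theorem HasCompactSupport.comp_prodMk_left [T2Space X] (hf : HasCompactSupport f) (y : Y) :
    HasCompactSupport fun x => f (x, y) :=
  .intro (hf.image continuous_fst) fun _ hx =>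
    image_eq_zero_of_notMem_tsupport fun h => hx ⟨_, h, rfl⟩

theorem HasCompactSupport.comp_prodMk_right [T2Space Y] (hf : HasCompactSupport f) (x : X) :
    HasCompactSupport fun y => f (x, y) :=
  .intro (hf.image continuous_snd) fun _ hy =>
    image_eq_zero_of_notMem_tsupport fun h => hy ⟨_, h, rfl⟩

theorem tsupport_comp_prodMk_left_subset (y : Y) :
    (tsupport fun x => f (x, y)) ⊆ (·, y) ⁻¹' tsupport f :=
  tsupport_comp_subset_preimage f (Continuous.prodMk_left y)

theorem notMem_tsupport_comp_prodMk_left {p : X × Y} (hp : p ∉ tsupport f) :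
    p.1 ∉ tsupport fun x => f (x, p.2) :=
  fun h => hp (tsupport_comp_prodMk_left_subset p.2 h)

theorem notMem_tsupport_comp_prodMk_right {p : X × Y} (hp : p ∉ tsupport f) :
    p.2 ∉ tsupport fun y => f (p.1, y) :=
  fun h => hp (tsupport_comp_subset_preimage f (Continuous.prodMk_right p.1) h)

end Slices

section SliceDerivatives

variable {E F : Type*} [NormedAddCommGroup E] [NormedSpace ℝ E] [NormedAddCommGroup F]
  [NormedSpace ℝ F] {f : E × F → ℝ} {n m : WithTop ℕ∞}

theorem ContDiff.fderiv_comp_prodMk_left_apply (hf : ContDiff ℝ n f) (hmn : m + 1 ≤ n)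
    (v : E) :
    ContDiff ℝ m fun p : E × F => fderiv ℝ (fun x => f (x, p.2)) p.1 v :=
  ContDiff.fderiv_apply (f := fun p x => f (x, p.2)) (hf.comp (by fun_prop)) contDiff_fst
    contDiff_const hmn

theorem ContDiff.fderiv_comp_prodMk_right_apply (hf : ContDiff ℝ n f) (hmn : m + 1 ≤ n)
    (v : F) :
    ContDiff ℝ m fun p : E × F => fderiv ℝ (fun y => f (p.1, y)) p.2 v :=
  ContDiff.fderiv_apply (f := fun p y => f (p.1, y)) (hf.comp (by fun_prop)) contDiff_snd
    contDiff_const hmn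

end SliceDerivatives

section Gradient

variable {E : Type*} [NormedAddCommGroup E] [InnerProductSpace ℝ E] [CompleteSpace E]
  {D : Set E} {V : E → ℝ} {gradV : E → E}

theorem ContDiffOn.continuousOn_of_hasGradientAt (hV : ContDiffOn ℝ 1 V D) (hD : IsOpen D)
    (hgradV : ∀ x ∈ D, HasGradientAt V (gradV x) x) : ContinuousOn gradV D :=
  ((InnerProductSpace.toDual ℝ E).symm.continuous.comp_continuousOn
    (hV.continuousOn_fderiv_of_isOpen hD le_rfl)).congr fun x hx => by
      simp [(hgradV x hx).hasFDerivAt.fderiv]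

theorem hasGradientAt_inner_apply_self {T : E →L[ℝ] E} (hT : (T : E →ₗ[ℝ] E).IsSymmetric)
    (x : E) : HasGradientAt (fun x => ⟪T x, x⟫) (2 • T x) x := by
  refine hasGradientAt_iff_hasFDerivAt.2 <|
    (T.hasFDerivAt.inner ℝ (hasFDerivAt_id x)).congr_fderiv (ContinuousLinearMap.ext fun v => ?_)
  have hTvx : ⟪T v, x⟫ = ⟪T x, v⟫ := (hT v x).trans (real_inner_comm _ _)
  simp only [ContinuousLinearMap.comp_apply, ContinuousLinearMap.prod_apply, id_eq,
    ContinuousLinearMap.id_apply, fderivInnerCLM_apply, hTvx, map_nsmul, smul_apply,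
    InnerProductSpace.toDual_apply_apply, nsmul_eq_mul]
  ring

theorem fderiv_mul_exp_neg_apply {h : E → ℝ} (hgradV : ∀ x ∈ D, HasGradientAt V (gradV x) x)
    (hh : Differentiable ℝ h) (hhD : tsupport h ⊆ D) (x v : E) :
    fderiv ℝ (fun x => h x * Real.exp (-V x)) x v
      = (fderiv ℝ h x v - h x * ⟪gradV x, v⟫) * Real.exp (-V x) := by
  by_cases hx : x ∈ D
  · rw [((hh x).hasFDerivAt.fun_mul (hgradV x hx).hasFDerivAt.fun_neg.exp).fderiv]
    simp only [smul_neg, add_apply, neg_apply, smul_apply, InnerProductSpace.toDual_apply_apply,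
      smul_eq_mul]
    ring
  · have hx' : x ∉ tsupport h := fun h' => hx (hhD h')
    rw [fderiv_of_notMem_tsupport ℝ fun h' => hx' (tsupport_mul_subset_left h'),
      fderiv_of_notMem_tsupport ℝ hx', image_eq_zero_of_notMem_tsupport hx']
    simp

theorem integral_sum_fderiv_sub_inner_mul_exp_neg_eq_zero [FiniteDimensional ℝ E]
    [MeasurableSpace E] [BorelSpace E] {μ : Measure E} [μ.IsAddHaarMeasure] {ι : Type*}
    (s : Finset ι) (hD : IsOpen D) (hV : ContDiffOn ℝ 1 V D)
    (hgradV : ∀ x ∈ D, HasGradientAt V (gradV x) x)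
    {u : ι → E → ℝ} (hu : ∀ i, ContDiff ℝ 1 (u i)) (h'u : ∀ i, HasCompactSupport (u i))
    (huD : ∀ i, tsupport (u i) ⊆ D) (v : ι → E) :
    ∫ x, ∑ i ∈ s, (fderiv ℝ (u i) x (v i) - u i x * ⟪gradV x, v i⟫) * Real.exp (-V x)
      ∂μ = 0 := by
  simp_rw [← fderiv_mul_exp_neg_apply hgradV ((hu _).differentiable one_ne_zero) (huD _)]
  exact integral_sum_fderiv_apply_eq_zero s (fun i => contDiff_mul_exp_neg hD hV (hu i) (huD i))
    (fun i => (h'u i).mul_right) v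

end Gradient

open Matrix in
theorem Matrix.IsSymm.mulVec_dotProduct_inv_mulVec {ι R : Type*} [Fintype ι] [DecidableEq ι]
    [CommRing R] {Γ : Matrix ι ι R} (hΓ : Γ.IsSymm) (hΓ' : IsUnit Γ) (a y : ι → R) :
    Γ *ᵥ a ⬝ᵥ Γ⁻¹ *ᵥ y = a ⬝ᵥ y := by
  rw [dotProduct_mulVec, ← vecMul_transpose, hΓ.eq, vecMul_vecMul,
    mul_nonsing_inv _ ((isUnit_iff_isUnit_det Γ).1 hΓ'), vecMul_one]

section Euclidean

variable {ι : Type*} [Fintype ι] [DecidableEq ι] {D : Set (EuclideanSpace ℝ ι)}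
  {V : EuclideanSpace ℝ ι → ℝ} {gradV : EuclideanSpace ℝ ι → EuclideanSpace ℝ ι}
  {Γ : Matrix ι ι ℝ}

theorem integral_laplacian_transport_mul_exp_eq_zero (hD : IsOpen D) (hV : ContDiffOn ℝ 1 V D)
    (hgradV : ∀ x ∈ D, HasGradientAt V (gradV x) x) {g : EuclideanSpace ℝ ι → ℝ}
    (hg : ContDiff ℝ 2 g) (h'g : HasCompactSupport g) (hgD : tsupport g ⊆ D)
    (y : EuclideanSpace ℝ ι) (c : ℝ) :
    ∫ x, ((1/2 : ℝ) * (∑ i, fderiv ℝ (fun x => fderiv ℝ g x (EuclideanSpace.single i 1)) x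
          (EuclideanSpace.single i 1))
        - (1/2 : ℝ) * (∑ i, gradV x i * fderiv ℝ g x (EuclideanSpace.single i 1))
        + (∑ i, y i * fderiv ℝ g x (EuclideanSpace.single i 1))
        - g x * ∑ i, y i * gradV x i) * Real.exp (-V x - c) = 0 := by
  set e : ι → EuclideanSpace ℝ ι := fun i => EuclideanSpace.single i 1
  have hDg : ∀ i, ContDiff ℝ 1 fun x => fderiv ℝ g x (e i) := fun i =>
    hg.fderiv_right (by norm_num) |>.clm_apply contDiff_const
  set u : ι → EuclideanSpace ℝ ι → ℝ := fun i x =>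
    (1/2 : ℝ) * fderiv ℝ g x (e i) + y i * g x
  have hu : ∀ i, ContDiff ℝ 1 (u i) := fun i =>
    (contDiff_const.mul (hDg i)).add (contDiff_const.mul (hg.of_le one_le_two))
  have h'u : ∀ i, HasCompactSupport (u i) := fun i =>
    ((h'g.fderiv_apply ℝ (e i)).mul_left).add h'g.mul_left
  have huD : ∀ i, tsupport (u i) ⊆ D := fun i =>
    (tsupport_add _ _).trans <| Set.union_subset
      (tsupport_mul_subset_right.trans ((tsupport_fderiv_apply_subset ℝ (e i)).trans hgD))
      (tsupport_mul_subset_right.trans hgD)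
  have hDu : ∀ i x, fderiv ℝ (u i) x (e i) =
      (1/2 : ℝ) * fderiv ℝ (fun x => fderiv ℝ g x (e i)) x (e i) + y i * fderiv ℝ g x (e i) := by
    intro i x
    rw [((((hDg i).differentiable one_ne_zero x).hasFDerivAt.const_mul (1/2 : ℝ)).fun_add
      ((hg.differentiable two_ne_zero x).hasFDerivAt.const_mul (y i))).fderiv]
    simp
  rw [← integral_sum_fderiv_sub_inner_mul_exp_neg_eq_zero (μ := volume) (V := fun x => V x + c)
    Finset.univ hD (hV.add contDiffOn_const) (fun x hx => (hgradV x hx).add_const c) hu h'u huD e]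
  congr 1 with x
  simp only [hDu, u, e, EuclideanSpace.inner_single_right, Finset.mul_sum, Finset.sum_mul,
    ← Finset.sum_sub_distrib, ← Finset.sum_add_distrib, neg_add']
  refine Finset.sum_congr rfl fun i _ => ?_
  simp only [conj_trivial, one_mul]
  ring

theorem integral_inert_drift_mul_exp_eq_zero (hΓ : Γ.IsSymm) (hΓ' : IsUnit Γ)
    {h : EuclideanSpace ℝ ι → ℝ} (hh : ContDiff ℝ 1 h) (h'h : HasCompactSupport h)
    (a : EuclideanSpace ℝ ι) (c : ℝ) :
    ∫ y, (h y * (∑ i, y i * a i)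
        - (1/2 : ℝ) * ∑ i, Γ.mulVec (fun j => a j) i *
            fderiv ℝ h y (EuclideanSpace.single i 1))
      * Real.exp (-c - ⟪(EuclideanSpace.equiv ι ℝ).symm (Γ⁻¹.mulVec (fun i => y i)), y⟫)
      = 0 := by
  set T := Matrix.toEuclideanCLM (𝕜 := ℝ) Γ⁻¹
  have hT : (T : EuclideanSpace ℝ ι →ₗ[ℝ] EuclideanSpace ℝ ι).IsSymmetric :=
    Matrix.isSymmetric_toEuclideanLin_iff.2 (Matrix.isHermitian_iff_isSymm.2 hΓ.inv)
  set e : ι → EuclideanSpace ℝ ι := fun i => EuclideanSpace.single i 1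
  set k := Γ.mulVec (fun j => a j)
  set u : ι → EuclideanSpace ℝ ι → ℝ := fun i y => -(1/2 : ℝ) * k i * h y
  rw [← integral_sum_fderiv_sub_inner_mul_exp_neg_eq_zero (μ := volume) Finset.univ isOpen_univ
    (V := fun y => c + ⟪T y, y⟫)
    (contDiffOn_const.add (T.contDiff.inner ℝ contDiff_id).contDiffOn)
    (fun y _ => (hasGradientAt_inner_apply_self hT y).const_add c)
    (u := u) (fun _ => contDiff_const.mul hh) (fun _ => h'h.mul_left)
    (fun _ => Set.subset_univ _) e]
  congr 1 with y
  have hdot := hΓ.mulVec_dotProduct_inv_mulVec hΓ' (fun j => a j) (fun j => y j)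
  rw [dotProduct_comm (fun j => a j)] at hdot
  simp only [dotProduct] at hdot
  have hQ : ⟪(EuclideanSpace.equiv ι ℝ).symm (Γ⁻¹.mulVec (fun i => y i)), y⟫ = ⟪T y, y⟫ := rfl
  rw [hQ, ← hdot]
  simp only [u, e, fderiv_const_mul (hh.differentiable one_ne_zero y),
    EuclideanSpace.inner_single_right, Finset.mul_sum, Finset.sum_mul, ← Finset.sum_sub_distrib,
    neg_add']
  refine Finset.sum_congr rfl fun i _ => ?_
  simp only [smul_apply, smul_eq_mul, PiLp.smul_apply, nsmul_eq_mul,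
    Matrix.ofLp_toEuclideanCLM, conj_trivial, T]
  ring

variable {f : EuclideanSpace ℝ ι × EuclideanSpace ℝ ι → ℝ}

noncomputable def invariantDensity (V : EuclideanSpace ℝ ι → ℝ) (Γ : Matrix ι ι ℝ)
    (p : EuclideanSpace ℝ ι × EuclideanSpace ℝ ι) : ℝ :=
  Real.exp (-V p.1
    - ⟪(EuclideanSpace.equiv ι ℝ).symm (Γ⁻¹.mulVec (fun i => p.2 i)), p.2⟫)

noncomputable def xPart (V : EuclideanSpace ℝ ι → ℝ)
    (gradV : EuclideanSpace ℝ ι → EuclideanSpace ℝ ι) (Γ : Matrix ι ι ℝ)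
    (f : EuclideanSpace ℝ ι × EuclideanSpace ℝ ι → ℝ)
    (p : EuclideanSpace ℝ ι × EuclideanSpace ℝ ι) : ℝ :=
  ((1/2 : ℝ) * (∑ i, fderiv ℝ (fun x => fderiv ℝ (fun x' => f (x', p.2)) x
        (EuclideanSpace.single i 1)) p.1 (EuclideanSpace.single i 1))
      - (1/2 : ℝ) * (∑ i, gradV p.1 i *
          fderiv ℝ (fun x => f (x, p.2)) p.1 (EuclideanSpace.single i 1))
      + (∑ i, p.2 i * fderiv ℝ (fun x => f (x, p.2)) p.1 (EuclideanSpace.single i 1))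
      - f p * ∑ i, p.2 i * gradV p.1 i) * invariantDensity V Γ p

noncomputable def yPart (V : EuclideanSpace ℝ ι → ℝ)
    (gradV : EuclideanSpace ℝ ι → EuclideanSpace ℝ ι) (Γ : Matrix ι ι ℝ)
    (f : EuclideanSpace ℝ ι × EuclideanSpace ℝ ι → ℝ)
    (p : EuclideanSpace ℝ ι × EuclideanSpace ℝ ι) : ℝ :=
  (f p * (∑ i, p.2 i * gradV p.1 i)
      - (1/2 : ℝ) * ∑ i, Γ.mulVec (fun j => gradV p.1 j) i *
          fderiv ℝ (fun y => f (p.1, y)) p.2 (EuclideanSpace.single i 1))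
    * invariantDensity V Γ p

theorem xPart_eq_zero_of_notMem_tsupport {p : EuclideanSpace ℝ ι × EuclideanSpace ℝ ι}
    (hp : p ∉ tsupport f) : xPart V gradV Γ f p = 0 := by
  have hp₁ := notMem_tsupport_comp_prodMk_left hp
  have hD₂ : ∀ v, fderiv ℝ (fun x => fderiv ℝ (fun x' => f (x', p.2)) x v) p.1 = 0 :=
    fun v => fderiv_of_notMem_tsupport ℝ fun h => hp₁ (tsupport_fderiv_apply_subset ℝ v h)
  simp [xPart, hD₂, fderiv_of_notMem_tsupport ℝ hp₁, image_eq_zero_of_notMem_tsupport hp]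

theorem yPart_eq_zero_of_notMem_tsupport {p : EuclideanSpace ℝ ι × EuclideanSpace ℝ ι}
    (hp : p ∉ tsupport f) : yPart V gradV Γ f p = 0 := by
  simp [yPart, fderiv_of_notMem_tsupport ℝ (notMem_tsupport_comp_prodMk_right hp),
    image_eq_zero_of_notMem_tsupport hp]

theorem continuousOn_invariantDensity (hV : ContinuousOn V D) :
    ContinuousOn (invariantDensity V Γ) (D ×ˢ Set.univ) :=
  ((hV.comp continuousOn_fst fun _ hp => hp.1).neg.sub
    ((Matrix.toEuclideanCLM (𝕜 := ℝ) Γ⁻¹).continuous.comp continuous_snd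
      |>.inner continuous_snd).continuousOn).rexp

theorem integrable_xPart (hD : IsOpen D) (hV : ContDiffOn ℝ 1 V D)
    (hgradV : ∀ x ∈ D, HasGradientAt V (gradV x) x) (hf : ContDiff ℝ 2 f)
    (h'f : HasCompactSupport f) (hfD : tsupport f ⊆ D ×ˢ Set.univ) :
    Integrable (xPart V gradV Γ f) := by
  refine ContinuousOn.integrable_of_eq_zero_of_isCompact ?_ (hD.prod isOpen_univ) h'f hfD
    fun p hp => xPart_eq_zero_of_notMem_tsupport hp
  have hgrad : ∀ i, ContinuousOn (fun p : EuclideanSpace ℝ ι × EuclideanSpace ℝ ι =>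
      gradV p.1 i) (D ×ˢ Set.univ) := fun i =>
    (EuclideanSpace.proj i).continuous.comp_continuousOn <|
      (hV.continuousOn_of_hasGradientAt hD hgradV).comp continuousOn_fst fun _ hp => hp.1
  have hsnd : ∀ i, Continuous fun p : EuclideanSpace ℝ ι × EuclideanSpace ℝ ι => p.2 i := by
    fun_prop
  have hD₁ := fun v => (hf.fderiv_comp_prodMk_left_apply (m := 1) (by norm_num) v)
  have hD₂ := fun v =>
    ((hD₁ v).fderiv_comp_prodMk_left_apply (m := 0) (by norm_num) v).continuous
  exact ((((continuousOn_const.mul (continuousOn_finsetSum _ fun i _ => (hD₂ _).continuousOn)).sub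
    (continuousOn_const.mul (continuousOn_finsetSum _ fun i _ =>
      (hgrad i).mul (hD₁ _).continuous.continuousOn))).add
    (continuousOn_finsetSum _ fun i _ =>
      (hsnd i).continuousOn.mul (hD₁ _).continuous.continuousOn)).sub
    (hf.continuous.continuousOn.mul (continuousOn_finsetSum _ fun i _ =>
      (hsnd i).continuousOn.mul (hgrad i)))).mul (continuousOn_invariantDensity hV.continuousOn)

theorem integrable_yPart (hD : IsOpen D) (hV : ContDiffOn ℝ 1 V D)
    (hgradV : ∀ x ∈ D, HasGradientAt V (gradV x) x) (hf : ContDiff ℝ 2 f)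
    (h'f : HasCompactSupport f) (hfD : tsupport f ⊆ D ×ˢ Set.univ) :
    Integrable (yPart V gradV Γ f) := by
  refine ContinuousOn.integrable_of_eq_zero_of_isCompact ?_ (hD.prod isOpen_univ) h'f hfD
    fun p hp => yPart_eq_zero_of_notMem_tsupport hp
  have hgrad : ContinuousOn (fun p : EuclideanSpace ℝ ι × EuclideanSpace ℝ ι => gradV p.1)
      (D ×ˢ Set.univ) :=
    (hV.continuousOn_of_hasGradientAt hD hgradV).comp continuousOn_fst fun _ hp => hp.1
  have hsnd : ∀ i, Continuous fun p : EuclideanSpace ℝ ι × EuclideanSpace ℝ ι => p.2 i := by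
    fun_prop
  have hDy := fun v => (hf.fderiv_comp_prodMk_right_apply (m := 0) (by norm_num) v).continuous
  exact (((hf.continuous.continuousOn.mul (continuousOn_finsetSum _ fun i _ =>
    (hsnd i).continuousOn.mul ((EuclideanSpace.proj i).continuous.comp_continuousOn hgrad))).sub
    (continuousOn_const.mul (continuousOn_finsetSum _ fun i _ =>
      ((EuclideanSpace.proj i).continuous.comp_continuousOn
        ((Matrix.toEuclideanCLM (𝕜 := ℝ) Γ).continuous.comp_continuousOn hgrad)).mul
      (hDy _).continuousOn)))).mul (continuousOn_invariantDensity hV.continuousOn)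

theorem integral_xPart_eq_zero (hD : IsOpen D) (hV : ContDiffOn ℝ 1 V D)
    (hgradV : ∀ x ∈ D, HasGradientAt V (gradV x) x) (hf : ContDiff ℝ 2 f)
    (h'f : HasCompactSupport f) (hfD : tsupport f ⊆ D ×ˢ Set.univ) :
    ∫ p, xPart V gradV Γ f p = 0 := by
  rw [Measure.volume_eq_prod, integral_prod_symm _ (integrable_xPart hD hV hgradV hf h'f hfD)]
  exact integral_eq_zero_of_ae <| ae_of_all _ fun y =>
    integral_laplacian_transport_mul_exp_eq_zero hD hV hgradV (g := fun x => f (x, y))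
      (hf.comp (contDiff_id.prodMk contDiff_const)) (h'f.comp_prodMk_left y)
      (fun x hx => (hfD (tsupport_comp_prodMk_left_subset y hx)).1) y
      ⟪(EuclideanSpace.equiv ι ℝ).symm (Γ⁻¹.mulVec (fun i => y i)), y⟫

theorem integral_yPart_eq_zero (hD : IsOpen D) (hV : ContDiffOn ℝ 1 V D)
    (hgradV : ∀ x ∈ D, HasGradientAt V (gradV x) x) (hΓ : Γ.IsSymm) (hΓ' : IsUnit Γ)
    (hf : ContDiff ℝ 2 f) (h'f : HasCompactSupport f) (hfD : tsupport f ⊆ D ×ˢ Set.univ) :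
    ∫ p, yPart V gradV Γ f p = 0 := by
  rw [Measure.volume_eq_prod, integral_prod _ (integrable_yPart hD hV hgradV hf h'f hfD)]
  exact integral_eq_zero_of_ae <| ae_of_all _ fun x =>
    integral_inert_drift_mul_exp_eq_zero hΓ hΓ' (h := fun y => f (x, y))
      ((hf.comp (contDiff_const.prodMk contDiff_id)).of_le one_le_two)
      (h'f.comp_prodMk_right x) (gradV x) (V x)

end Euclidean

/-- The product measure `c·1_D(x)·e^{−V(x)}·e^{−⟨Γ⁻¹y,y⟩} dx dy` annihilates the
generator `𝒢f = (1/2)Δ_x f − (1/2)⟨∇V, ∇_x f⟩ + ⟨y, ∇_x f⟩ − (1/2)⟨Γ∇V, ∇_y f⟩`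
on C² functions with compact support in `D × ℝ^d`. -/
theorem stmt_7 (d : ℕ)
    (D : Set (EuclideanSpace ℝ (Fin d))) (hD_open : IsOpen D)
    (V : EuclideanSpace ℝ (Fin d) → ℝ) (hV_smooth : ContDiffOn ℝ 1 V D)
    (gradV : EuclideanSpace ℝ (Fin d) → EuclideanSpace ℝ (Fin d))
    (hgradV : ∀ x ∈ D, HasGradientAt V (gradV x) x)
    (Γ : Matrix (Fin d) (Fin d) ℝ) (hΓ_symm : Γ.transpose = Γ) (hΓ_pos : Γ.PosDef)
    (f : EuclideanSpace ℝ (Fin d) × EuclideanSpace ℝ (Fin d) → ℝ)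
    (hf_smooth : ContDiff ℝ 2 f) (hf_cpt : HasCompactSupport f)
    (hf_supp : tsupport f ⊆ D ×ˢ (Set.univ : Set (EuclideanSpace ℝ (Fin d)))) :
    ∫ p in D ×ˢ (Set.univ : Set (EuclideanSpace ℝ (Fin d))),
      ((1/2 : ℝ) * (∑ i : Fin d,
          fderiv ℝ (fun x => fderiv ℝ (fun x' => f (x', p.2)) x (EuclideanSpace.single i 1))
            p.1 (EuclideanSpace.single i 1))
        - (1/2 : ℝ) * (∑ i : Fin d,
            gradV p.1 i * fderiv ℝ (fun x => f (x, p.2)) p.1 (EuclideanSpace.single i 1))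
        + (∑ i : Fin d,
            p.2 i * fderiv ℝ (fun x => f (x, p.2)) p.1 (EuclideanSpace.single i 1))
        - (1/2 : ℝ) * (∑ i : Fin d,
            Γ.mulVec (fun j => gradV p.1 j) i *
              fderiv ℝ (fun y => f (p.1, y)) p.2 (EuclideanSpace.single i 1)))
      * Real.exp (- V p.1 -
          ⟪(EuclideanSpace.equiv (Fin d) ℝ).symm (Γ⁻¹.mulVec (fun i => p.2 i)), p.2⟫) = 0 := by
  calc _ = ∫ p in D ×ˢ Set.univ, xPart V gradV Γ f p + yPart V gradV Γ f p := by
        refine integral_congr_ae (ae_of_all _ fun p => ?_)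
        simp only [xPart, yPart, invariantDensity]
        ring
    _ = ∫ p, xPart V gradV Γ f p + yPart V gradV Γ f p :=
        setIntegral_eq_integral_of_forall_compl_eq_zero fun p hp => by
          rw [xPart_eq_zero_of_notMem_tsupport (fun h => hp (hf_supp h)),
            yPart_eq_zero_of_notMem_tsupport (fun h => hp (hf_supp h)), add_zero]
    _ = 0 := by
        rw [integral_add (integrable_xPart hD_open hV_smooth hgradV hf_smooth hf_cpt hf_supp)
            (integrable_yPart hD_open hV_smooth hgradV hf_smooth hf_cpt hf_supp),
          integral_xPart_eq_zero hD_open hV_smooth hgradV hf_smooth hf_cpt hf_supp,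
          integral_yPart_eq_zero hD_open hV_smooth hgradV hΓ_symm hΓ_pos.isUnit hf_smooth hf_cpt
            hf_supp, add_zero]
end

section
/- Let 𝒳 be a separable metrizable topological space with its Borel σ-algebra, let (P_t)_{t≥0} be a family of Markov transition probability kernels on 𝒳 satisfying the Chapman–Kolmogorov relation P_{t+s}(y, A) = ∫ P_t(y', A) P_s(y, dy') for all s, t ≥ 0, y ∈ 𝒳 and Borel A, and such that (t, y) ↦ P_t(y, A) is jointly measurable for every Borel A. Let x* ∈ 𝒳 and suppose: (iii) there is a Borel measurable function s : 𝒳 → [0, ∞) such that for every y ∈ 𝒳 and every open neighborhood W of x*, P_{s(y)}(y, W) > 0; and (iv) for every open neighborhood U of x* there exist an open neighborhood U' ⊆ U of x* and T_U > 0 such that inf_{y ∈ U'} P_t(y, U) > 0 for every t ∈ [0, T_U). Then every invariant probability measure π for (P_t) satisfies π(U) > 0 for every open neighborhood U of x*; that is, x* belongs to the support of every invariant probability measure. -/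
/-!
If `π(U) = 0`, integrating the invariance relation over `t ≥ 0` and applying Tonelli gives
`∫ π(dy) ∫_0^∞ P_t(y, U) dt = 0`, so some `y` has `P_t(y, U) = 0` for almost every `t ≥ 0`.
But for every `y`, Chapman–Kolmogorov through time `s(y)` combines (iii) and (iv) into
`P_t(y, U) > 0` for all `t ∈ [s(y), s(y) + T_U)`, an interval of positive length.
-/

open MeasureTheory Set
open scoped ENNReal

lemma lintegral_pos_of_le_on {α : Type*} [MeasurableSpace α] {μ : Measure α}
    {f : α → ℝ≥0∞} {s : Set α} {ε : ℝ≥0∞} (hs : MeasurableSet s) (hε : 0 < ε)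
    (hμs : 0 < μ s) (hf : ∀ x ∈ s, ε ≤ f x) : 0 < ∫⁻ x, f x ∂μ :=
  calc 0 < ε * μ s := ENNReal.mul_pos hε.ne' hμs.ne'
    _ = ∫⁻ _ in s, ε ∂μ := (setLIntegral_const s ε).symm
    _ ≤ ∫⁻ x in s, f x ∂μ := setLIntegral_mono' hs hf
    _ ≤ ∫⁻ x, f x ∂μ := setLIntegral_le_lintegral s f

lemma setLIntegral_Ico_pos {f : ℝ → ℝ≥0∞} (hf : Measurable f) {a b : ℝ} (hab : a < b)
    (hpos : ∀ r ∈ Ico a b, 0 < f r) : 0 < ∫⁻ r in Ico a b, f r := by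
  have hsupp : Function.support f ∩ Ico a b = Ico a b :=
    inter_eq_right.2 fun r hr => (hpos r hr).ne'
  rw [setLIntegral_pos_iff hf, hsupp, Real.volume_Ico]
  exact ENNReal.ofReal_pos.2 (sub_pos.2 hab)

section MarkovFamily

variable {X : Type*} [MeasurableSpace X] {P : ℝ → X → Measure X}

lemma ae_setLIntegral_Ici_eq_zero_of_invariant {A : Set X}
    (hP_meas : Measurable fun p : ℝ × X => P p.1 p.2 A) (π : Measure X) [SFinite π]
    (hπ_inv : ∀ t : ℝ, 0 ≤ t → π A = ∫⁻ y, P t y A ∂π) (hπA : π A = 0) :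
    ∀ᵐ y ∂π, ∫⁻ r in Ici (0 : ℝ), P r y A = 0 := by
  have hmeas : Measurable fun p : X × ℝ => P p.2 p.1 A := hP_meas.comp measurable_swap
  have hdouble : ∫⁻ y, (∫⁻ r in Ici (0 : ℝ), P r y A) ∂π = 0 := by
    rw [lintegral_lintegral_swap hmeas.aemeasurable]
    refine (setLIntegral_congr_fun measurableSet_Ici fun r hr => ?_).trans lintegral_zero
    rw [← hπ_inv r hr, hπA]
  have hinner : Measurable fun y => ∫⁻ r in Ici (0 : ℝ), P r y A :=
    hmeas.lintegral_prod_right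
  exact (lintegral_eq_zero_iff hinner).1 hdouble

lemma apply_pos_of_reach_of_uniform_pos {A V : Set X} {y : X} {s₀ T : ℝ}
    (hCK : ∀ t : ℝ, 0 ≤ t → P (t + s₀) y A = ∫⁻ z, P t z A ∂(P s₀ y))
    (hV : MeasurableSet V)
    (hunif : ∀ t : ℝ, 0 ≤ t → t < T → ∃ ε : ℝ≥0∞, 0 < ε ∧ ∀ z ∈ V, ε ≤ P t z A)
    (hreach : 0 < P s₀ y V) :
    ∀ r ∈ Ico s₀ (s₀ + T), 0 < P r y A := by
  intro r ⟨hs₀r, hrT⟩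
  obtain ⟨ε, hε, hεV⟩ := hunif (r - s₀) (sub_nonneg.2 hs₀r) (by linarith)
  rw [← sub_add_cancel r s₀, hCK (r - s₀) (sub_nonneg.2 hs₀r)]
  exact lintegral_pos_of_le_on hV hε hreach hεV

end MarkovFamily

theorem stmt_8_general {𝒳 : Type*} [TopologicalSpace 𝒳] [MeasurableSpace 𝒳] [BorelSpace 𝒳]
    (P : ℝ → 𝒳 → Measure 𝒳)
    (hP_meas : ∀ A : Set 𝒳, MeasurableSet A →
      Measurable (fun p : ℝ × 𝒳 => P p.1 p.2 A))
    (hCK : ∀ s t : ℝ, 0 ≤ s → 0 ≤ t → ∀ y : 𝒳, ∀ A : Set 𝒳, MeasurableSet A →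
      P (t + s) y A = ∫⁻ y', P t y' A ∂(P s y))
    (xstar : 𝒳)
    (hiii : ∃ s : 𝒳 → ℝ, Measurable s ∧ (∀ y, 0 ≤ s y) ∧
      ∀ y : 𝒳, ∀ W : Set 𝒳, IsOpen W → xstar ∈ W → 0 < P (s y) y W)
    (hiv : ∀ U : Set 𝒳, IsOpen U → xstar ∈ U →
      ∃ U' : Set 𝒳, U' ⊆ U ∧ IsOpen U' ∧ xstar ∈ U' ∧
        ∃ T : ℝ, 0 < T ∧ ∀ t : ℝ, 0 ≤ t → t < T →
          ∃ ε : ℝ≥0∞, 0 < ε ∧ ∀ y ∈ U', ε ≤ P t y U)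
    (π : Measure 𝒳) [IsProbabilityMeasure π]
    (hπ_inv : ∀ t : ℝ, 0 ≤ t → ∀ A : Set 𝒳, MeasurableSet A →
      π A = ∫⁻ y, P t y A ∂π)
    (U : Set 𝒳) (hU_open : IsOpen U) (hxU : xstar ∈ U) :
    0 < π U := by
  obtain ⟨s, -, hs0, hreach⟩ := hiii
  obtain ⟨U', -, hU'_open, hxU', T, hT, hunif⟩ := hiv U hU_open hxU
  have hU := hU_open.measurableSet
  have hU_meas_time : ∀ y, Measurable fun r => P r y U := fun y =>
    (hP_meas U hU).comp (measurable_id.prodMk measurable_const)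
  have hpos_Ico : ∀ y, ∀ r ∈ Ico (s y) (s y + T), 0 < P r y U := fun y =>
    apply_pos_of_reach_of_uniform_pos (fun t ht => hCK (s y) t (hs0 y) ht y U hU)
      hU'_open.measurableSet hunif (hreach y U' hU'_open hxU')
  have htime_pos : ∀ y, 0 < ∫⁻ r in Ici (0 : ℝ), P r y U := fun y =>
    (setLIntegral_Ico_pos (hU_meas_time y) (lt_add_of_pos_right (s y) hT) (hpos_Ico y)).trans_le
      (lintegral_mono_set fun r hr => (hs0 y).trans hr.1)
  refine pos_iff_ne_zero.2 fun hπU => ?_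
  obtain ⟨y, hy⟩ := (ae_setLIntegral_Ici_eq_zero_of_invariant (hP_meas U hU) π
    (fun t ht => hπ_inv t ht U hU) hπU).exists
  exact (htime_pos y).ne' hy

/-- For a Markov semigroup `(P_t)` on a separable metrizable space, if (iii) from every
point `y` some `P_{s(y)}(y, ·)` charges every neighborhood of `x*`, and (iv) near `x*`
the transition probabilities into a neighborhood `U` of `x*` are uniformly positive for
small times, then `x*` belongs to the support of every invariant probability measure. -/
theorem stmt_8 {𝒳 : Type*} [TopologicalSpace 𝒳] [MeasurableSpace 𝒳] [BorelSpace 𝒳]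
    [TopologicalSpace.SeparableSpace 𝒳] [TopologicalSpace.MetrizableSpace 𝒳]
    (P : ℝ → 𝒳 → Measure 𝒳)
    (hP_prob : ∀ t y, IsProbabilityMeasure (P t y))
    (hP_meas : ∀ A : Set 𝒳, MeasurableSet A →
      Measurable (fun p : ℝ × 𝒳 => P p.1 p.2 A))
    (hCK : ∀ s t : ℝ, 0 ≤ s → 0 ≤ t → ∀ y : 𝒳, ∀ A : Set 𝒳, MeasurableSet A →
      P (t + s) y A = ∫⁻ y', P t y' A ∂(P s y))
    (xstar : 𝒳)
    (hiii : ∃ s : 𝒳 → ℝ, Measurable s ∧ (∀ y, 0 ≤ s y) ∧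
      ∀ y : 𝒳, ∀ W : Set 𝒳, IsOpen W → xstar ∈ W → 0 < P (s y) y W)
    (hiv : ∀ U : Set 𝒳, IsOpen U → xstar ∈ U →
      ∃ U' : Set 𝒳, U' ⊆ U ∧ IsOpen U' ∧ xstar ∈ U' ∧
        ∃ T : ℝ, 0 < T ∧ ∀ t : ℝ, 0 ≤ t → t < T →
          ∃ ε : ℝ≥0∞, 0 < ε ∧ ∀ y ∈ U', ε ≤ P t y U)
    (π : Measure 𝒳) [IsProbabilityMeasure π]
    (hπ_inv : ∀ t : ℝ, 0 ≤ t → ∀ A : Set 𝒳, MeasurableSet A →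
      π A = ∫⁻ y, P t y A ∂π)
    (U : Set 𝒳) (hU_open : IsOpen U) (hxU : xstar ∈ U) :
    0 < π U :=
  stmt_8_general P hP_meas hCK xstar hiii hiv π hπ_inv U hU_open hxU
end
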